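/- Let σ be a positive-definite density matrix in M_n(ℂ) with φ = tr(σ ·), and let P be GNS-symmetric with respect to φ and unital completely positive. Then P commutes with left and right multiplication by any power of σ in the following sense: P(σ^z x σ^{-z}) = σ^z P(x) σ^{-z} for all z ∈ ℂ and x ∈ M_n(ℂ). -/

import Mathlib

open scoped ComplexOrder
open Matrix Complex

abbrev Mat (n : ℕ) := Matrix (Fin n) (Fin n) ℂ

/-- Complete positivity of a map on `M_n(ℂ)`: all sums `∑ xⱼ* P(aⱼ* aₖ) xₖ`
are positive semidefinite. -/
def IsCP {n : ℕ} (P : Mat n → Mat n) : Prop :=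
  ∀ (m : ℕ) (a x : Fin m → Mat n),
    (∑ j, ∑ k, (x j)ᴴ * P ((a j)ᴴ * a k) * x k).PosSemidef

/-- GNS-symmetry of `P` with respect to the state `φ = tr(σ ·)`. -/
def IsGNSSymm {n : ℕ} (σ : Mat n) (P : Mat n → Mat n) : Prop :=
  ∀ x y : Mat n, (σ * (P x)ᴴ * y).trace = (σ * xᴴ * P y).trace

/-- Complex power `σ^z` of a positive definite matrix, via the spectral
decomposition. -/
noncomputable def mpow {n : ℕ} {σ : Mat n} (hσ : σ.PosDef) (z : ℂ) : Mat n :=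
  (hσ.1.eigenvectorUnitary : Mat n) *
    Matrix.diagonal (fun i => (hσ.1.eigenvalues i : ℂ) ^ z) *
    star (hσ.1.eigenvectorUnitary : Mat n)

/- ### Auxiliary lemmas -/

/-- Every Hermitian matrix is a difference of two PSD matrices. -/
lemma herm_decomp {n : ℕ} {h : Mat n} (hh : h.IsHermitian) :
    ∃ p q : Mat n, p.PosSemidef ∧ q.PosSemidef ∧ h = p - q := by
  refine ⟨(hh.eigenvectorUnitary : Mat n) * diagonal (fun i => ((max (hh.eigenvalues i) 0 : ℝ) : ℂ)) * star (hh.eigenvectorUnitary : Mat n),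
    (hh.eigenvectorUnitary : Mat n) * diagonal (fun i => ((max (-hh.eigenvalues i) 0 : ℝ) : ℂ)) * star (hh.eigenvectorUnitary : Mat n), ?_, ?_, ?_⟩
  · exact (Matrix.posSemidef_diagonal_iff.2 (fun i => by positivity)).mul_mul_conjTranspose_same _
  · exact (Matrix.posSemidef_diagonal_iff.2 (fun i => by positivity)).mul_mul_conjTranspose_same _
  · conv_lhs => rw [hh.spectral_theorem, Unitary.conjStarAlgAut_apply]
    rw [← sub_mul, ← mul_sub, Matrix.diagonal_sub]
    congr 2
    refine congrArg diagonal (funext fun i => ?_)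
    show ((hh.eigenvalues i : ℝ) : ℂ) = ((max (hh.eigenvalues i) 0 : ℝ) : ℂ) - ((max (-hh.eigenvalues i) 0 : ℝ) : ℂ)
    rw [← Complex.ofReal_sub]
    norm_cast
    rcases le_or_gt 0 (hh.eigenvalues i) with h'|h'
    · simp [max_eq_left h', max_eq_right (neg_nonpos.2 h')]
    · rw [max_eq_right h'.le, max_eq_left (by linarith)]
      ring

/-- Nondegeneracy of the trace pairing. -/
lemma trace_faithful {n : ℕ} {A B : Mat n}
    (h : ∀ x : Mat n, (x * A).trace = (x * B).trace) : A = B := by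
  ext i j
  have := h (single j i 1)
  simpa [Matrix.trace, Matrix.mul_apply, Matrix.single,
    Finset.sum_ite_eq, Matrix.diag, ite_and] using this

lemma diag_std {n : ℕ} (d e : Fin n → ℂ) (k l : Fin n) :
    diagonal d * single k l (1 : ℂ) * diagonal e
      = (d k * e l) • single k l 1 := by
  ext i j
  simp only [Matrix.mul_diagonal, Matrix.diagonal_mul, Matrix.smul_apply,
    Matrix.single, Matrix.of_apply, smul_eq_mul]
  split_ifs with h
  · obtain ⟨rfl, rfl⟩ := h; ring
  · ring

lemma mpow_mul_mpow {n : ℕ} {σ : Mat n} (hσ : σ.PosDef) (z w : ℂ) :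
    mpow hσ z * mpow hσ w = mpow hσ (z + w) := by
  unfold mpow
  have h1 : star (hσ.1.eigenvectorUnitary : Mat n) * (hσ.1.eigenvectorUnitary : Mat n) = 1 :=
    Matrix.UnitaryGroup.star_mul_self _
  simp only [Matrix.mul_assoc]
  rw [← Matrix.mul_assoc (star (hσ.1.eigenvectorUnitary : Mat n))
      (hσ.1.eigenvectorUnitary : Mat n), h1, Matrix.one_mul,
    ← Matrix.mul_assoc (diagonal _) (diagonal _), Matrix.diagonal_mul_diagonal]
  congr 2
  refine congrArg diagonal (funext fun i => ?_)
  rw [← Complex.cpow_add _ _ (by exact_mod_cast (hσ.eigenvalues_pos i).ne')]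

lemma mpow_zero {n : ℕ} {σ : Mat n} (hσ : σ.PosDef) : mpow hσ 0 = 1 := by
  unfold mpow
  simp only [Complex.cpow_zero, Matrix.diagonal_one, Matrix.mul_one]
  exact Unitary.coe_mul_star_self _

lemma mpow_one {n : ℕ} {σ : Mat n} (hσ : σ.PosDef) : mpow hσ 1 = σ := by
  unfold mpow
  simp only [Complex.cpow_one]
  exact hσ.1.spectral_theorem.symm

/-- a GNS-symmetric unital completely positive map commutes with
conjugation by all complex powers of `σ`. -/
theorem stmt_2 {n : ℕ} (σ : Mat n) (hσ : σ.PosDef) (htr : σ.trace = 1)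
    (P : Mat n →ₗ[ℂ] Mat n) (hP1 : P 1 = 1) (hCP : IsCP P)
    (hGNS : IsGNSSymm σ P) :
    ∀ (z : ℂ) (x : Mat n),
      P (mpow hσ z * x * mpow hσ (-z)) = mpow hσ z * P x * mpow hσ (-z) := by
  have hu1 : star (hσ.1.eigenvectorUnitary : Mat n) * (hσ.1.eigenvectorUnitary : Mat n) = 1 :=
    Matrix.UnitaryGroup.star_mul_self _
  have hu2 : (hσ.1.eigenvectorUnitary : Mat n) * star (hσ.1.eigenvectorUnitary : Mat n) = 1 :=
    Unitary.coe_mul_star_self _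
  set u : Mat n := (hσ.1.eigenvectorUnitary : Mat n) with hudef
  set ev : Fin n → ℝ := hσ.1.eigenvalues with hevdef
  have evpos : ∀ i, 0 < ev i := fun i => hσ.eigenvalues_pos i
  have conj_back : ∀ A : Mat n, star u * (u * A * star u) * u = A := by
    intro A
    calc star u * (u * A * star u) * u = (star u * u) * A * (star u * u) := by
          simp only [Matrix.mul_assoc]
      _ = A := by rw [hu1, Matrix.one_mul, Matrix.mul_one]
  have cancel : ∀ A B : Mat n, u * A * star u = u * B * star u → A = B := by
    intro A B hAB
    have := congrArg (fun M => star u * M * u) hAB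
    simpa only [conj_back] using this
  -- positivity of P
  have hpos : ∀ s : Mat n, s.PosSemidef → (P s).PosSemidef := by
    intro s hs
    open scoped MatrixOrder Matrix.Norms.L2Operator in
    obtain ⟨b, hb⟩ := CStarAlgebra.nonneg_iff_eq_star_mul_self.mp hs.nonneg
    have h := hCP 1 (fun _ => b) (fun _ => 1)
    simpa [hb, Matrix.star_eq_conjTranspose] using h
  have hherm : ∀ h : Mat n, h.IsHermitian → (P h).IsHermitian := by
    intro h hh
    obtain ⟨p, q, hp, hq, rfl⟩ := herm_decomp hh
    rw [map_sub]
    exact (hpos p hp).1.sub (hpos q hq).1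
  have hstar : ∀ y : Mat n, P yᴴ = (P y)ᴴ := by
    intro y
    set h1 : Mat n := (1/2 : ℂ) • (y + yᴴ) with hh1def
    set h2 : Mat n := (I/2 : ℂ) • (yᴴ - y) with hh2def
    have hH1 : h1.IsHermitian := by
      rw [hh1def]
      unfold Matrix.IsHermitian
      ext i j
      simp [Matrix.conjTranspose_apply, Matrix.add_apply, Matrix.smul_apply]
      ring
    have hH2 : h2.IsHermitian := by
      rw [hh2def]
      unfold Matrix.IsHermitian
      ext i j
      simp [Matrix.conjTranspose_apply, Matrix.sub_apply, Matrix.smul_apply]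
      ring
    have hy : y = h1 + I • h2 := by
      rw [hh1def, hh2def]
      ext i j
      simp [Matrix.conjTranspose_apply, Matrix.add_apply, Matrix.sub_apply, Matrix.smul_apply]
      ring_nf
      simp [I_sq]
      ring
    have hyc : yᴴ = h1 - I • h2 := by
      rw [hh1def, hh2def]
      ext i j
      simp [Matrix.conjTranspose_apply, Matrix.add_apply, Matrix.sub_apply, Matrix.smul_apply]
      ring_nf
      simp [I_sq]
      ring
    clear_value h1 h2
    calc P yᴴ = P h1 - I • P h2 := by rw [hyc, map_sub, LinearMap.map_smul]
      _ = (P y)ᴴ := by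
          conv_rhs => rw [hy]
          rw [map_add, LinearMap.map_smul, conjTranspose_add, conjTranspose_smul,
            hherm _ hH1, hherm _ hH2]
          simp [Complex.star_def, Complex.conj_I, sub_eq_add_neg, neg_smul]
  -- Step A
  have hA : ∀ a b : Mat n, (σ * P a * b).trace = (σ * a * P b).trace := by
    intro a b
    have h := hGNS aᴴ b
    rwa [hstar, conjTranspose_conjTranspose, conjTranspose_conjTranspose] at h
  -- Step B
  have hB : ∀ a b : Mat n, (P a * σ * b).trace = (a * σ * P b).trace := by
    intro a b
    have h : ((σ * (P a)ᴴ * bᴴ)ᴴ).trace = ((σ * aᴴ * P bᴴ)ᴴ).trace := by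
      rw [Matrix.trace_conjTranspose, Matrix.trace_conjTranspose, hGNS a bᴴ]
    simp only [conjTranspose_mul, conjTranspose_conjTranspose, hstar, hσ.1.eq] at h
    calc (P a * σ * b).trace = (b * (P a * σ)).trace := by
          rw [Matrix.trace_mul_comm]
      _ = (P b * (a * σ)).trace := by
          simpa only [Matrix.mul_assoc] using h
      _ = (a * σ * P b).trace := by
          rw [Matrix.trace_mul_comm]
  -- inverse facts
  have hss' : σ * mpow hσ (-1) = 1 := by
    have h : mpow hσ 1 * mpow hσ (-1) = 1 := by
      rw [mpow_mul_mpow, show (1 : ℂ) + -1 = 0 by ring, mpow_zero]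
    rwa [mpow_one] at h
  have hs's : mpow hσ (-1) * σ = 1 := by
    have h : mpow hσ (-1) * mpow hσ 1 = 1 := by
      rw [mpow_mul_mpow, show (-1 : ℂ) + 1 = 0 by ring, mpow_zero]
    rwa [mpow_one] at h
  -- key commutation with modular conjugation
  have hkey : ∀ y : Mat n, P (σ * y * mpow hσ (-1)) = σ * P y * mpow hσ (-1) := by
    intro y
    have main : P (σ * y * mpow hσ (-1)) * σ = σ * P y := by
      apply trace_faithful
      intro w
      calc (w * (P (σ * y * mpow hσ (-1)) * σ)).trace
          = (σ * w * P (σ * y * mpow hσ (-1))).trace := by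
            rw [← Matrix.mul_assoc, Matrix.trace_mul_cycle]
        _ = (σ * P w * (σ * y * mpow hσ (-1))).trace := (hA w _).symm
        _ = (P w * σ * y).trace := by
            rw [show σ * P w * (σ * y * mpow hσ (-1))
                = (σ * (P w * (σ * y))) * mpow hσ (-1) from by
              simp only [Matrix.mul_assoc]]
            rw [Matrix.trace_mul_comm, ← Matrix.mul_assoc, hs's, Matrix.one_mul,
              ← Matrix.mul_assoc]
        _ = (w * σ * P y).trace := hB w y
        _ = (w * (σ * P y)).trace := by rw [Matrix.mul_assoc]
    have h2 := congrArg (fun M => M * mpow hσ (-1)) main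
    simpa only [Matrix.mul_assoc, hss', Matrix.mul_one] using h2
  -- diagonal picture
  set D : Mat n := diagonal (fun i => ((ev i : ℝ) : ℂ)) with hDdef
  set D' : Mat n := diagonal (fun i => ((ev i : ℝ) : ℂ)⁻¹) with hD'def
  have hσspec : σ = u * D * star u := hσ.1.spectral_theorem
  have hσ'spec : mpow hσ (-1) = u * D' * star u := by
    unfold mpow
    rw [hD'def]
    congr 2
    exact congrArg diagonal (funext fun i => by
      rw [show (-1 : ℂ) = -(1:ℂ) from rfl, Complex.cpow_neg, Complex.cpow_one])
  have evC_ne : ∀ i, ((ev i : ℝ) : ℂ) ≠ 0 := fun i => by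
    exact_mod_cast (evpos i).ne'
  have cpow_ne : ∀ (i : Fin n) (w : ℂ), ((ev i : ℝ) : ℂ) ^ w ≠ 0 := by
    intro i w
    simp [Complex.cpow_eq_zero_iff, evC_ne i]
  have hmz : ∀ w : ℂ, mpow hσ w = u * diagonal (fun i => ((ev i : ℝ) : ℂ) ^ w) * star u :=
    fun w => rfl
  -- per-basis commutation for all z
  have base : ∀ (z : ℂ) (k l : Fin n),
      P (mpow hσ z * (u * single k l 1 * star u) * mpow hσ (-z))
        = mpow hσ z * P (u * single k l 1 * star u) * mpow hσ (-z) := by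
    intro z k l
    set E : Mat n := single k l (1 : ℂ) with hEdef
    set M : Mat n := star u * P (u * E * star u) * u with hMdef
    have hPM : P (u * E * star u) = u * M * star u := by
      rw [hMdef]
      calc P (u * E * star u)
          = (u * star u) * P (u * E * star u) * (u * star u) := by
            rw [hu2, Matrix.one_mul, Matrix.mul_one]
        _ = u * (star u * P (u * E * star u) * u) * star u := by
            simp only [Matrix.mul_assoc]
    have claim1 : (((ev k : ℝ) : ℂ) * ((ev l : ℝ) : ℂ)⁻¹) • M = D * M * D' := by
      have hk := hkey (u * E * star u)
      have lhs_eq : σ * (u * E * star u) * mpow hσ (-1) = u * (D * E * D') * star u := by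
        rw [hσ'spec]; rw [hσspec]
        calc (u * D * star u) * (u * E * star u) * (u * D' * star u)
            = u * (D * ((star u * u) * (E * ((star u * u) * (D' * star u))))) := by
              simp only [Matrix.mul_assoc]
          _ = u * (D * E * D') * star u := by
              rw [hu1]
              simp only [Matrix.one_mul, Matrix.mul_assoc]
      have rhs_eq : σ * P (u * E * star u) * mpow hσ (-1) = u * (D * M * D') * star u := by
        rw [hσ'spec]; rw [hPM]; rw [hσspec]
        calc (u * D * star u) * (u * M * star u) * (u * D' * star u)
            = u * (D * ((star u * u) * (M * ((star u * u) * (D' * star u))))) := by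
              simp only [Matrix.mul_assoc]
          _ = u * (D * M * D') * star u := by
              rw [hu1]
              simp only [Matrix.one_mul, Matrix.mul_assoc]
      have hDED : D * E * D' = (((ev k : ℝ) : ℂ) * ((ev l : ℝ) : ℂ)⁻¹) • E := by
        rw [hDdef, hD'def, hEdef, diag_std]
      rw [lhs_eq, rhs_eq, hDED] at hk
      have hsm : P (u * ((((ev k : ℝ) : ℂ) * ((ev l : ℝ) : ℂ)⁻¹) • E) * star u)
          = u * ((((ev k : ℝ) : ℂ) * ((ev l : ℝ) : ℂ)⁻¹) • M) * star u := by
        rw [mul_smul_comm, smul_mul_assoc, LinearMap.map_smul, hPM,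
          ← smul_mul_assoc, ← mul_smul_comm]
      exact cancel _ _ (hsm.symm.trans hk)
    have claim1' : ∀ i j, (((ev k : ℝ) : ℂ) * ((ev l : ℝ) : ℂ)⁻¹) * M i j
        = ((ev i : ℝ) : ℂ) * M i j * ((ev j : ℝ) : ℂ)⁻¹ := by
      intro i j
      have e := congrFun (congrFun claim1 i) j
      simpa only [Matrix.smul_apply, smul_eq_mul, hDdef, hD'def,
        Matrix.diagonal_mul, Matrix.mul_diagonal] using e
    have claim2 : diagonal (fun i => ((ev i : ℝ) : ℂ) ^ z) * M
          * diagonal (fun i => ((ev i : ℝ) : ℂ) ^ (-z))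
        = (((ev k : ℝ) : ℂ) ^ z * ((ev l : ℝ) : ℂ) ^ (-z)) • M := by
      ext i j
      simp only [Matrix.smul_apply, Matrix.diagonal_mul, Matrix.mul_diagonal, smul_eq_mul]
      rcases eq_or_ne (M i j) 0 with h0 | h0
      · simp [h0]
      · have h1 : ((ev k : ℝ) : ℂ) * ((ev l : ℝ) : ℂ)⁻¹
            = ((ev i : ℝ) : ℂ) * ((ev j : ℝ) : ℂ)⁻¹ := by
          have e := claim1' i j
          have e' : (((ev k : ℝ) : ℂ) * ((ev l : ℝ) : ℂ)⁻¹) * M i j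
              = (((ev i : ℝ) : ℂ) * ((ev j : ℝ) : ℂ)⁻¹) * M i j := by
            rw [e]; ring
          exact mul_right_cancel₀ h0 e'
        have hreal : ev k * ev j = ev i * ev l := by
          have hC : ((ev k : ℝ) : ℂ) * ((ev j : ℝ) : ℂ)
              = ((ev i : ℝ) : ℂ) * ((ev l : ℝ) : ℂ) := by
            field_simp [evC_ne] at h1
            linear_combination h1
          exact_mod_cast hC
        have hc : ((ev k : ℝ) : ℂ) ^ z * ((ev j : ℝ) : ℂ) ^ z
            = ((ev i : ℝ) : ℂ) ^ z * ((ev l : ℝ) : ℂ) ^ z := by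
          rw [← Complex.mul_cpow_ofReal_nonneg (evpos k).le (evpos j).le,
              ← Complex.mul_cpow_ofReal_nonneg (evpos i).le (evpos l).le]
          norm_cast
          rw [hreal]
        rw [Complex.cpow_neg, Complex.cpow_neg]
        field_simp [cpow_ne]
        linear_combination -hc
    have hL : mpow hσ z * (u * E * star u) * mpow hσ (-z)
        = u * ((((ev k : ℝ) : ℂ) ^ z * ((ev l : ℝ) : ℂ) ^ (-z)) • E) * star u := by
      rw [hmz z, hmz (-z)]
      calc (u * diagonal (fun i => ((ev i : ℝ) : ℂ) ^ z) * star u) * (u * E * star u)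
            * (u * diagonal (fun i => ((ev i : ℝ) : ℂ) ^ (-z)) * star u)
          = u * (diagonal (fun i => ((ev i : ℝ) : ℂ) ^ z) * ((star u * u) * (E *
              ((star u * u) * (diagonal (fun i => ((ev i : ℝ) : ℂ) ^ (-z)) * star u))))) := by
            simp only [Matrix.mul_assoc]
        _ = u * (diagonal (fun i => ((ev i : ℝ) : ℂ) ^ z) * E
              * diagonal (fun i => ((ev i : ℝ) : ℂ) ^ (-z))) * star u := by
            rw [hu1]
            simp only [Matrix.one_mul, Matrix.mul_assoc]
        _ = u * ((((ev k : ℝ) : ℂ) ^ z * ((ev l : ℝ) : ℂ) ^ (-z)) • E) * star u := by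
            rw [hEdef, diag_std]
    have hR : mpow hσ z * P (u * E * star u) * mpow hσ (-z)
        = u * ((((ev k : ℝ) : ℂ) ^ z * ((ev l : ℝ) : ℂ) ^ (-z)) • M) * star u := by
      rw [hmz z, hmz (-z), hPM]
      calc (u * diagonal (fun i => ((ev i : ℝ) : ℂ) ^ z) * star u) * (u * M * star u)
            * (u * diagonal (fun i => ((ev i : ℝ) : ℂ) ^ (-z)) * star u)
          = u * (diagonal (fun i => ((ev i : ℝ) : ℂ) ^ z) * ((star u * u) * (M *
              ((star u * u) * (diagonal (fun i => ((ev i : ℝ) : ℂ) ^ (-z)) * star u))))) := by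
            simp only [Matrix.mul_assoc]
        _ = u * (diagonal (fun i => ((ev i : ℝ) : ℂ) ^ z) * M
              * diagonal (fun i => ((ev i : ℝ) : ℂ) ^ (-z))) * star u := by
            rw [hu1]
            simp only [Matrix.one_mul, Matrix.mul_assoc]
        _ = u * ((((ev k : ℝ) : ℂ) ^ z * ((ev l : ℝ) : ℂ) ^ (-z)) • M) * star u := by
            rw [claim2]
    rw [hL, hR, mul_smul_comm, smul_mul_assoc, LinearMap.map_smul, hPM,
      ← smul_mul_assoc, ← mul_smul_comm]
  -- assemble by linearity
  intro z x
  have hfg : (P.comp (((LinearMap.mulLeft ℂ (mpow hσ z)).comp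
        (LinearMap.mulRight ℂ (mpow hσ (-z)))).comp
        ((LinearMap.mulLeft ℂ u).comp (LinearMap.mulRight ℂ (star u)))))
      = ((LinearMap.mulLeft ℂ (mpow hσ z)).comp
        (LinearMap.mulRight ℂ (mpow hσ (-z)))).comp
        (P.comp ((LinearMap.mulLeft ℂ u).comp (LinearMap.mulRight ℂ (star u)))) := by
    apply Module.Basis.ext (Matrix.stdBasis ℂ (Fin n) (Fin n))
    rintro ⟨k, l⟩
    simp only [LinearMap.comp_apply, LinearMap.mulLeft_apply, LinearMap.mulRight_apply,
      Matrix.stdBasis_eq_single]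
    have hb := base z k l
    simp only [Matrix.mul_assoc] at hb ⊢
    exact hb
  have hfg' := LinearMap.congr_fun hfg (star u * x * u)
  simp only [LinearMap.comp_apply, LinearMap.mulLeft_apply, LinearMap.mulRight_apply] at hfg'
  have hxId : u * ((star u * x * u) * star u) = x := by
    calc u * ((star u * x * u) * star u) = (u * star u) * x * (u * star u) := by
          simp only [Matrix.mul_assoc]
      _ = x := by rw [hu2, Matrix.one_mul, Matrix.mul_one]
  rw [hxId] at hfg'
  calc P (mpow hσ z * x * mpow hσ (-z))
      = P (mpow hσ z * (x * mpow hσ (-z))) := by rw [Matrix.mul_assoc]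
    _ = mpow hσ z * (P x * mpow hσ (-z)) := hfg'
    _ = mpow hσ z * P x * mpow hσ (-z) := by rw [Matrix.mul_assoc]
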